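/- Let U : ℝ^d → ℝ be a C² convex function such that for all x the largest eigenvalue of D²U(x) is at most c̄ · U(x)^{-r}, where c̄ > 0, r ∈ [0,1), and U is positive with unique minimizer x* and U(x*) = 1. Then for all x ∈ ℝ^d, |∇U(x)|² ≤ (2c̄/(1-r)) · U(x)^{1-r}. In particular the function x ↦ √(U(x)) is Lipschitz with constant √(c̄/(2(1-r))). -/

import Mathlib

/-!
Restrict `U` to the descent line `s t = U (x + t • v)`, `v = -∇U(x)/‖∇U(x)‖`. There
`s'' ≤ c̄ s^{-r}`, so the energy `s'² - (2c̄/(1-r)) s^{1-r}` has derivative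
`2 s' (s'' - c̄ s^{-r}) ≥ 0` as long as `s' ≤ 0`. Since `s > 0`, `s'` cannot stay below `-ε`
forever, and `s'` is nondecreasing by convexity; so if the energy at `0` were positive, `s'`
would reach, through values `≤ 0`, a point where `s'²` is below that energy, although the energy
there is even smaller than `s'²`. The Lipschitz bound follows from `‖∇√U‖ = ‖∇U‖ / (2√U)` and
`U ≥ 1`.
-/

open Real Set
open scoped RealInnerProductSpace

section OneDimensional

variable {s s' s'' : ℝ → ℝ} {c r : ℝ}

theorem monotoneOn_energy_of_deriv_nonpos (hr : r ≠ 1) (hs : ∀ t, 0 < s t)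
    (hs' : ∀ t, HasDerivAt s (s' t) t) (hs'' : ∀ t, HasDerivAt s' (s'' t) t)
    (hbound : ∀ t, s'' t ≤ c * s t ^ (-r)) {a b : ℝ} (hneg : ∀ t ∈ Icc a b, s' t ≤ 0) :
    MonotoneOn (fun t => s' t ^ 2 - 2 * c / (1 - r) * s t ^ (1 - r)) (Icc a b) := by
  have hr' : 1 - r ≠ 0 := sub_ne_zero.2 hr.symm
  have hderiv : ∀ t, HasDerivAt (fun t => s' t ^ 2 - 2 * c / (1 - r) * s t ^ (1 - r))
      (2 * s' t * (s'' t - c * s t ^ (-r))) t := by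
    intro t
    refine (((hs'' t).pow 2).sub (((hs' t).rpow_const (p := 1 - r) (Or.inl (hs t).ne')).const_mul
      (2 * c / (1 - r)))).congr_deriv ?_
    rw [show 1 - r - 1 = -r by ring]
    push_cast
    field_simp
  refine monotoneOn_of_hasDerivWithinAt_nonneg (convex_Icc a b)
    (fun t _ => (hderiv t).continuousAt.continuousWithinAt)
    (fun t _ => (hderiv t).hasDerivWithinAt) fun t ht => ?_
  exact mul_nonneg_of_nonpos_of_nonpos
    (mul_nonpos_of_nonneg_of_nonpos zero_le_two (hneg t (interior_subset ht)))
    (sub_nonpos.2 (hbound t))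

theorem exists_neg_lt_deriv_of_pos (hs : ∀ t, 0 < s t) (hs' : ∀ t, HasDerivAt s (s' t) t)
    {ε : ℝ} (hε : 0 < ε) : ∃ t, 0 ≤ t ∧ -ε < s' t := by
  have hT : 0 < s 0 / ε := div_pos (hs 0) hε
  obtain ⟨t, ht, hslope⟩ := exists_hasDerivAt_eq_slope s s' hT
    (fun t _ => (hs' t).continuousAt.continuousWithinAt) fun t _ => hs' t
  refine ⟨t, ht.1.le, ?_⟩
  rw [hslope, sub_zero, lt_div_iff₀ hT]
  have := hs (s 0 / ε)
  field_simp
  linarith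

theorem sq_deriv_le_of_second_deriv_le_rpow (hc : 0 < c) (hr : r < 1) (hs : ∀ t, 0 < s t)
    (hs' : ∀ t, HasDerivAt s (s' t) t) (hs'' : ∀ t, HasDerivAt s' (s'' t) t)
    (hbound : ∀ t, s'' t ≤ c * s t ^ (-r)) (hmono : Monotone s') (h0 : s' 0 ≤ 0) :
    s' 0 ^ 2 ≤ 2 * c / (1 - r) * s 0 ^ (1 - r) := by
  set energy := fun t => s' t ^ 2 - 2 * c / (1 - r) * s t ^ (1 - r)
  by_contra! hE0
  replace hE0 : 0 < energy 0 := sub_pos.2 hE0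
  obtain ⟨t₁, ht₁, hε⟩ := exists_neg_lt_deriv_of_pos hs hs' (sqrt_pos.2 hE0)
  obtain ⟨t₀, ⟨ht₀, -⟩, hs't₀⟩ := intermediate_value_Icc ht₁
    (fun t _ => (hs'' t).continuousAt.continuousWithinAt)
    ⟨le_min (hmono ht₁) h0, min_le_left (s' t₁) 0⟩
  have hneg : ∀ t ∈ Icc 0 t₀, s' t ≤ 0 :=
    fun t ht => (hmono ht.2).trans (hs't₀ ▸ min_le_right _ _)
  have hE_le : energy 0 ≤ energy t₀ :=
    monotoneOn_energy_of_deriv_nonpos hr.ne hs hs' hs'' hbound hneg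
      (left_mem_Icc.2 ht₀) (right_mem_Icc.2 ht₀) ht₀
  have hsq : s' t₀ ^ 2 < energy 0 := by
    have hlow : -√(energy 0) < s' t₀ := hs't₀ ▸ lt_min hε (neg_neg_of_pos (sqrt_pos.2 hE0))
    have hup : s' t₀ < √(energy 0) := (hneg t₀ (right_mem_Icc.2 ht₀)).trans_lt (sqrt_pos.2 hE0)
    simpa only [sq_sqrt hE0.le] using sq_lt_sq' hlow hup
  have hpos : 0 < 2 * c / (1 - r) * s t₀ ^ (1 - r) :=
    mul_pos (div_pos (by positivity) (sub_pos.2 hr)) (rpow_pos_of_pos (hs t₀) _)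
  linarith

end OneDimensional

section NormedSpace

variable {E F : Type*} [NormedAddCommGroup E] [NormedSpace ℝ E] [NormedAddCommGroup F]
  [NormedSpace ℝ F]

theorem HasFDerivAt.hasDerivAt_add_smul {f : E → F} {f' : E →L[ℝ] F} {x v : E} {t : ℝ}
    (hf : HasFDerivAt f f' (x + t • v)) : HasDerivAt (fun τ : ℝ => f (x + τ • v)) (f' v) t := by
  have hline : HasDerivAt (fun τ : ℝ => x + τ • v) v t := by
    simpa using ((hasDerivAt_id t).smul_const v).const_add x
  exact hf.comp_hasDerivAt t hline

theorem ConvexOn.comp_add_smul {f : E → ℝ} (hf : ConvexOn ℝ univ f) (x v : E) :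
    ConvexOn ℝ univ fun t : ℝ => f (x + t • v) := by
  have hline : (fun t : ℝ => f (x + t • v)) = f ∘ AffineMap.lineMap x (x + v) := by
    ext t
    simp [AffineMap.lineMap_apply, add_comm]
  rw [hline]
  exact hf.comp_affineMap _

theorem lipschitzWith_sqrt_of_sq_norm_fderiv_le {f : E → ℝ} {L : NNReal} (hf : Differentiable ℝ f)
    (hpos : ∀ x, 0 < f x) (hbound : ∀ x, ‖fderiv ℝ f x‖ ^ 2 ≤ 4 * L ^ 2 * f x) :
    LipschitzWith L fun x => √(f x) := by
  have hderiv : ∀ x, HasFDerivAt (fun y => √(f y)) ((1 / (2 * √(f x))) • fderiv ℝ f x) x :=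
    fun x => (hasDerivAt_sqrt (hpos x).ne').comp_hasFDerivAt x (hf x).hasFDerivAt
  refine lipschitzWith_of_nnnorm_fderiv_le (fun x => (hderiv x).differentiableAt) fun x => ?_
  rw [← NNReal.coe_le_coe, coe_nnnorm, (hderiv x).fderiv, norm_smul, norm_of_nonneg (by positivity),
    one_div_mul_eq_div, div_le_iff₀ (mul_pos two_pos (sqrt_pos.2 (hpos x)))]
  calc ‖fderiv ℝ f x‖ = √(‖fderiv ℝ f x‖ ^ 2) := (sqrt_sq (norm_nonneg _)).symm
    _ ≤ √(4 * L ^ 2 * f x) := sqrt_le_sqrt (hbound x)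
    _ = L * (2 * √(f x)) := by
      rw [sqrt_mul' _ (hpos x).le, sqrt_mul' _ (sq_nonneg _), sqrt_sq L.coe_nonneg,
        show (4 : ℝ) = 2 ^ 2 by norm_num, sqrt_sq zero_le_two]
      ring

end NormedSpace

section Gradient

variable {E : Type*} [NormedAddCommGroup E] [InnerProductSpace ℝ E] [CompleteSpace E]
  {U : E → ℝ}

theorem norm_fderiv_eq_norm_gradient (x : E) : ‖fderiv ℝ U x‖ = ‖gradient U x‖ := by
  rw [← toDual_gradient, LinearIsometryEquiv.norm_map]

theorem ContDiff.differentiable_gradient (hU : ContDiff ℝ 2 U) : Differentiable ℝ (gradient U) := by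
  have : gradient U = (InnerProductSpace.toDual ℝ E).symm ∘ fderiv ℝ U := by
    ext1 x; simp [gradient]
  rw [this]
  exact ((InnerProductSpace.toDual ℝ E).symm.contDiff.comp
    (hU.fderiv_right (by norm_num))).differentiable one_ne_zero

theorem sq_inner_gradient_le_of_hessian_le {c r : ℝ} (hU : ContDiff ℝ 2 U) (hUpos : ∀ x, 0 < U x)
    (hconv : ConvexOn ℝ univ U) (hc : 0 < c) (hr : r < 1)
    (hHess : ∀ x v, ⟪v, fderiv ℝ (gradient U) x v⟫ ≤ c * U x ^ (-r) * ‖v‖ ^ 2) {x v : E}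
    (hv : ‖v‖ = 1) (hdesc : ⟪v, gradient U x⟫ ≤ 0) :
    ⟪v, gradient U x⟫ ^ 2 ≤ 2 * c / (1 - r) * U x ^ (1 - r) := by
  have hs' : ∀ t : ℝ, HasDerivAt (fun τ : ℝ => U (x + τ • v)) ⟪v, gradient U (x + t • v)⟫ t := by
    intro t
    rw [real_inner_comm, inner_gradient_left]
    exact ((hU.differentiable (by norm_num)) _).hasFDerivAt.hasDerivAt_add_smul
  have hs'' : ∀ t : ℝ, HasDerivAt (fun τ : ℝ => ⟪v, gradient U (x + τ • v)⟫)
      ⟪v, fderiv ℝ (gradient U) (x + t • v) v⟫ t := fun t =>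
    ((innerSL ℝ v).hasFDerivAt.comp _
      (hU.differentiable_gradient _).hasFDerivAt).hasDerivAt_add_smul
  have hmono : Monotone fun t : ℝ => ⟪v, gradient U (x + t • v)⟫ := by
    intro a b hab
    simpa only [(hs' _).deriv] using
      (hconv.comp_add_smul x v).monotoneOn_deriv (fun t _ => (hs' t).differentiableAt)
        (mem_univ a) (mem_univ b) hab
  simpa using sq_deriv_le_of_second_deriv_le_rpow hc hr (fun t => hUpos _) hs' hs''
    (fun t => by simpa [hv] using hHess (x + t • v) v) hmono (by simpa using hdesc)

theorem sq_norm_gradient_le_of_hessian_le {c r : ℝ} (hU : ContDiff ℝ 2 U) (hUpos : ∀ x, 0 < U x)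
    (hconv : ConvexOn ℝ univ U) (hc : 0 < c) (hr : r < 1)
    (hHess : ∀ x v, ⟪v, fderiv ℝ (gradient U) x v⟫ ≤ c * U x ^ (-r) * ‖v‖ ^ 2) (x : E) :
    ‖gradient U x‖ ^ 2 ≤ 2 * c / (1 - r) * U x ^ (1 - r) := by
  set g := gradient U x
  rcases eq_or_ne g 0 with hg | hg
  · rw [hg, norm_zero, zero_pow two_ne_zero]
    exact mul_nonneg (div_nonneg (by positivity) (sub_pos.2 hr).le) (rpow_nonneg (hUpos x).le _)
  have hinner : ⟪-(‖g‖⁻¹ • g), g⟫ = -‖g‖ := by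
    rw [inner_neg_left, real_inner_smul_left, real_inner_self_eq_norm_sq]
    field_simp [norm_ne_zero_iff.2 hg]
  have := sq_inner_gradient_le_of_hessian_le hU hUpos hconv hc hr hHess
    (by rw [norm_neg, norm_smul, norm_inv, norm_norm, inv_mul_cancel₀ (norm_ne_zero_iff.2 hg)])
    (hinner.trans_le (neg_nonpos.2 (norm_nonneg g)))
  rwa [hinner, neg_sq] at this

end Gradient

theorem grad_sq_upper_bound_and_sqrt_lipschitz_general
    {d : ℕ} (U : EuclideanSpace ℝ (Fin d) → ℝ)
    (hU : ContDiff ℝ 2 U) (hUpos : ∀ x, 0 < U x)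
    (hconv : ConvexOn ℝ Set.univ U)
    (xstar : EuclideanSpace ℝ (Fin d))
    (hmin : ∀ x, U xstar ≤ U x)
    (hstar : U xstar = 1)
    (cbar r : ℝ) (hc : 0 < cbar) (hr0 : 0 ≤ r) (hr1 : r < 1)
    (hHess : ∀ x v, ⟪v, fderiv ℝ (gradient U) x v⟫ ≤ cbar * U x ^ (-r) * ‖v‖ ^ 2) :
    (∀ x, ‖gradient U x‖ ^ 2 ≤ 2 * cbar / (1 - r) * U x ^ (1 - r)) ∧
      LipschitzWith (Real.toNNReal (Real.sqrt (cbar / (2 * (1 - r)))))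
        (fun x => Real.sqrt (U x)) := by
  have hgrad := sq_norm_gradient_le_of_hessian_le hU hUpos hconv hc hr1 hHess
  refine ⟨hgrad, lipschitzWith_sqrt_of_sq_norm_fderiv_le (hU.differentiable (by norm_num)) hUpos
    fun x => ?_⟩
  have hr : 0 < 1 - r := sub_pos.2 hr1
  calc ‖fderiv ℝ U x‖ ^ 2 = ‖gradient U x‖ ^ 2 := by rw [norm_fderiv_eq_norm_gradient]
    _ ≤ 2 * cbar / (1 - r) * U x ^ (1 - r) := hgrad x
    _ ≤ 2 * cbar / (1 - r) * U x := by
      gcongr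
      exact rpow_le_self_of_one_le (hstar ▸ hmin x) (by linarith)
    _ = 4 * (Real.toNNReal √(cbar / (2 * (1 - r))) : ℝ) ^ 2 * U x := by
      rw [coe_toNNReal _ (sqrt_nonneg _), sq_sqrt (by positivity)]
      field_simp
      ring

/-- If `U` is `C²`, positive, convex, with unique minimizer `x*`, `U(x*) = 1`, and
`λ_max(D²U(x)) ≤ c̄·U(x)^{-r}`, then `|∇U(x)|² ≤ (2c̄/(1-r))·U(x)^{1-r}`; in particular
`√U` is Lipschitz with constant `√(c̄/(2(1-r)))`. -/
theorem grad_sq_upper_bound_and_sqrt_lipschitz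
    {d : ℕ} (hd : 1 ≤ d) (U : EuclideanSpace ℝ (Fin d) → ℝ)
    (hU : ContDiff ℝ 2 U) (hUpos : ∀ x, 0 < U x)
    (hconv : ConvexOn ℝ Set.univ U)
    (xstar : EuclideanSpace ℝ (Fin d))
    (hmin : ∀ x, U xstar ≤ U x)
    (hminUnique : ∀ x, U x = U xstar → x = xstar)
    (hcrit : gradient U xstar = 0)
    (hstar : U xstar = 1)
    (cbar r : ℝ) (hc : 0 < cbar) (hr0 : 0 ≤ r) (hr1 : r < 1)
    (hHess : ∀ x v, ⟪v, fderiv ℝ (gradient U) x v⟫ ≤ cbar * U x ^ (-r) * ‖v‖ ^ 2) :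
    (∀ x, ‖gradient U x‖ ^ 2 ≤ 2 * cbar / (1 - r) * U x ^ (1 - r)) ∧
      LipschitzWith (Real.toNNReal (Real.sqrt (cbar / (2 * (1 - r)))))
        (fun x => Real.sqrt (U x)) :=
  grad_sq_upper_bound_and_sqrt_lipschitz_general U hU hUpos hconv xstar hmin hstar cbar r hc hr0 hr1
    hHess
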